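/- Under exact EGPO updates with learning rate η satisfying 0 < η ≤ 1/(β+3), for every T ≥ 1 one has DualGap_β(π^{(T)}) ≤ (2/β + 4/η) · KL(π*_β ‖ π^{(0)}) · (1 − ηβ)^T. -/

import Mathlib

open Real

/-- Tabular softmax policy. -/
noncomputable def softmax {Y : Type*} [Fintype Y] (θ : Y → ℝ) : Y → ℝ :=
  fun y => Real.exp (θ y) / ∑ y', Real.exp (θ y')

/-- Kullback–Leibler divergence between distributions on a finite set. -/
noncomputable def KLdiv {Y : Type*} [Fintype Y] (p q : Y → ℝ) : ℝ :=
  ∑ y, p y * Real.log (p y / q y)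

/-- `(P π)(y) = ∑ y' P(y, y') π(y')`. -/
noncomputable def matVec {Y : Type*} [Fintype Y] (P : Y → Y → ℝ) (p : Y → ℝ) : Y → ℝ :=
  fun y => ∑ y', P y y' * p y'

/-- The probability simplex over a finite set. -/
def simplex (Y : Type*) [Fintype Y] : Set (Y → ℝ) :=
  {p | (∀ y, 0 ≤ p y) ∧ ∑ y, p y = 1}

/-- Value of the preference game: `V(π, π') = ∑ y y', π(y) P(y,y') π'(y')`. -/
noncomputable def Vval {Y : Type*} [Fintype Y] (P : Y → Y → ℝ) (p q : Y → ℝ) : ℝ :=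
  ∑ y, ∑ y', p y * P y y' * q y'

/-- Regularized value `V_β(π, π') = V(π, π') − β KL(π‖π_ref) + β KL(π'‖π_ref)`. -/
noncomputable def Vreg {Y : Type*} [Fintype Y] (P : Y → Y → ℝ) (β : ℝ) (πref : Y → ℝ)
    (p q : Y → ℝ) : ℝ :=
  Vval P p q - β * KLdiv p πref + β * KLdiv q πref

/-- Regularized duality gap. -/
noncomputable def DualGapReg {Y : Type*} [Fintype Y] (P : Y → Y → ℝ) (β : ℝ) (πref : Y → ℝ)
    (p : Y → ℝ) : ℝ :=
  (⨆ q : simplex Y, Vreg P β πref q.1 p) - (⨅ q : simplex Y, Vreg P β πref p q.1)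

/-- Unregularized duality gap. -/
noncomputable def DualGap {Y : Type*} [Fintype Y] (P : Y → Y → ℝ) (p : Y → ℝ) : ℝ :=
  (⨆ q : simplex Y, Vval P q.1 p) - (⨅ q : simplex Y, Vval P p q.1)

/-!
Softmax KL divergences are Bregman divergences of log-sum-exp in logit coordinates, so each
EGPO half-step obeys an exact three-point identity. Because `P + Pᵀ = 1`, the bilinear form of
`P` is skew on zero-sum vectors; what survives are error terms `(p - q) ⬝ᵥ P (r - s)`, bounded by
`√(KL(p ‖ q) KL(r ‖ s))` through `|P - 1/2| ≤ 1/2` and Pinsker's inequality. Summing the identities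
gives the contraction `KL(π* ‖ π⁽ᵗ⁺¹⁾) ≤ (1 - ηβ) KL(π* ‖ π⁽ᵗ⁾)` and a companion bound on
`KL(π⁽ᵗ⁺¹⁾ ‖ π*)`. Against a fixed softmax policy `π_θ` the regularized value is
`1/2 + β KL(q ‖ π_b) - β KL(π_θ ‖ π_b)`, where `b` is the logit of the regularized best response,
so the duality gap is at most `2β KL(π_θ ‖ π_b) ≤ 2β KL(π_θ ‖ π*) + (2/β) KL(π* ‖ π_θ)`.
-/

open Finset InformationTheory

lemma sub_le_mul_log_div {p q : ℝ} (hp : 0 ≤ p) (hq : 0 < q) : p - q ≤ p * log (p / q) := by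
  have h := mul_nonneg hq.le (klFun_nonneg (div_nonneg hp hq.le))
  have e : q * klFun (p / q) = p * log (p / q) + q - p := by
    rw [klFun_apply]; field_simp
  linarith

lemma hasDerivAt_log_sub_div {x : ℝ} (hx : 0 < x) :
    HasDerivAt (fun x => log x - (5 * x ^ 2 - 4 * x - 1) / (2 * x ^ 2 + 4 * x))
      (4 * (x - 1) ^ 3 / (2 * x ^ 2 + 4 * x) ^ 2) x := by
  have hnum : HasDerivAt (fun x : ℝ => 5 * x ^ 2 - 4 * x - 1) (10 * x - 4) x :=
    ((((hasDerivAt_pow 2 x).const_mul 5).sub ((hasDerivAt_id x).const_mul 4)).sub_const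
      1).congr_deriv (by norm_num; ring)
  have hden : HasDerivAt (fun x : ℝ => 2 * x ^ 2 + 4 * x) (4 * x + 4) x :=
    (((hasDerivAt_pow 2 x).const_mul 2).add ((hasDerivAt_id x).const_mul 4)).congr_deriv
      (by norm_num; ring)
  refine ((hasDerivAt_log hx.ne').sub (hnum.div hden (by positivity))).congr_deriv ?_
  field_simp
  ring

lemma div_le_log {x : ℝ} (hx : 0 < x) :
    (5 * x ^ 2 - 4 * x - 1) / (2 * x ^ 2 + 4 * x) ≤ log x := by
  set f := fun x : ℝ => log x - (5 * x ^ 2 - 4 * x - 1) / (2 * x ^ 2 + 4 * x)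
  set f' := fun x : ℝ => 4 * (x - 1) ^ 3 / (2 * x ^ 2 + 4 * x) ^ 2
  have hf : ∀ z, 0 < z → HasDerivAt f (f' z) z := fun z hz => hasDerivAt_log_sub_div hz
  have hcont : ∀ {D : Set ℝ}, D ⊆ Set.Ioi 0 → ContinuousOn f D :=
    fun hD z hz => (hf z (hD hz)).continuousAt.continuousWithinAt
  suffices f 1 ≤ f x by norm_num [f] at this; linarith
  rcases le_total 1 x with h | h
  · refine monotoneOn_of_hasDerivWithinAt_nonneg (f' := f') (convex_Ici 1)
      (hcont fun z (hz : 1 ≤ z) => show 0 < z by linarith) (fun z hz => ?_) (fun z hz => ?_)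
      (Set.mem_Ici.mpr le_rfl) h h
    all_goals rw [interior_Ici] at hz
    · exact (hf z (one_pos.trans hz)).hasDerivWithinAt
    · have : 0 ≤ z - 1 := by linarith [hz.out]
      positivity
  · refine antitoneOn_of_hasDerivWithinAt_nonpos (f' := f') (convex_Icc x 1)
      (hcont fun z hz => show 0 < z by linarith [hz.1]) (fun z hz => ?_) (fun z hz => ?_)
      ⟨le_rfl, h⟩ ⟨h, le_rfl⟩ h
    all_goals rw [interior_Icc] at hz
    · exact (hf z (hx.trans hz.1)).hasDerivWithinAt
    · have : (z - 1) ^ 3 ≤ 0 := Odd.pow_nonpos (by decide) (by linarith [hz.2])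
      exact div_nonpos_of_nonpos_of_nonneg (by linarith) (sq_nonneg _)

lemma sq_sub_div_le_mul_log_div {p q : ℝ} (hp : 0 < p) (hq : 0 < q) :
    3 * ((p - q) ^ 2 / (p + 2 * q)) ≤ 2 * (p * log (p / q) - p + q) := by
  have key := mul_le_mul_of_nonneg_left (div_le_log (div_pos hp hq)) hp.le
  have e : p * ((5 * (p / q) ^ 2 - 4 * (p / q) - 1) / (2 * (p / q) ^ 2 + 4 * (p / q)))
      = 3 / 2 * ((p - q) ^ 2 / (p + 2 * q)) + p - q := by
    field_simp
    ring
  linarith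

lemma sqrt_mul_le_div_add_mul {A B c : ℝ} (hA : 0 ≤ A) (hB : 0 ≤ B) (hc : 0 < c) :
    √(A * B) ≤ A / (4 * c) + c * B := by
  have hAB : A * B = 4 * (A / (4 * c)) * (c * B) := by field_simp
  rw [Real.sqrt_le_left (by positivity), hAB]
  nlinarith [sq_nonneg (A / (4 * c) - c * B)]

section KLdiv

variable {Y : Type*} [Fintype Y]

lemma KLdiv_self (p : Y → ℝ) : KLdiv p p = 0 := by
  simp [KLdiv]

lemma KLdiv_nonneg {p q : Y → ℝ} (hp : ∀ y, 0 ≤ p y) (hq : ∀ y, 0 < q y)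
    (hpq : ∑ y, p y = ∑ y, q y) : 0 ≤ KLdiv p q := by
  calc (0 : ℝ) = ∑ y, (p y - q y) := by rw [sum_sub_distrib, hpq, sub_self]
    _ ≤ KLdiv p q := sum_le_sum fun y _ => sub_le_mul_log_div (hp y) (hq y)

/-- Pinsker's inequality. Cauchy–Schwarz with weights `p + 2q`, of total mass `3`, reduces it to
the pointwise bound `sq_sub_div_le_mul_log_div`. -/
theorem sq_sum_abs_sub_le_two_mul_KLdiv {p q : Y → ℝ} (hp : ∀ y, 0 < p y)
    (hq : ∀ y, 0 < q y) (hps : ∑ y, p y = 1) (hqs : ∑ y, q y = 1) :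
    (∑ y, |p y - q y|) ^ 2 ≤ 2 * KLdiv p q := by
  have hw : ∀ y, 0 < p y + 2 * q y := fun y => by linarith [hp y, hq y]
  have h3 : ∑ y, (p y + 2 * q y) = 3 := by
    rw [sum_add_distrib, ← mul_sum, hps, hqs]; norm_num
  have hcs := sq_sum_div_le_sum_sq_div univ (fun y => |p y - q y|) fun y _ => hw y
  simp only [sq_abs, h3] at hcs
  have hpt : ∑ y, (p y - q y) ^ 2 / (p y + 2 * q y) ≤ 2 / 3 * KLdiv p q := by
    calc ∑ y, (p y - q y) ^ 2 / (p y + 2 * q y)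
        ≤ ∑ y, 2 / 3 * (p y * log (p y / q y) - p y + q y) := by
          refine sum_le_sum fun y _ => ?_
          linarith [sq_sub_div_le_mul_log_div (hp y) (hq y)]
      _ = 2 / 3 * KLdiv p q := by
          rw [← mul_sum, sum_add_distrib, sum_sub_distrib, hps, hqs, KLdiv]; ring
  linarith

end KLdiv

section Preference

variable {Y : Type*} [Fintype Y] {P : Y → Y → ℝ}

lemma matVec_sub (p q : Y → ℝ) : matVec P (p - q) = matVec P p - matVec P q := by
  ext y
  simp only [matVec, Pi.sub_apply, mul_sub, sum_sub_distrib]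

lemma Vval_eq_dotProduct_matVec (p q : Y → ℝ) : Vval P p q = p ⬝ᵥ matVec P q := by
  simp only [Vval, dotProduct, matVec, mul_sum, mul_assoc]

lemma dotProduct_matVec_add_dotProduct_matVec (hP : ∀ y y', P y y' + P y' y = 1)
    (p q : Y → ℝ) : p ⬝ᵥ matVec P q + q ⬝ᵥ matVec P p = (∑ y, p y) * ∑ y, q y := by
  have swap : q ⬝ᵥ matVec P p = ∑ y, ∑ y', p y * P y' y * q y' := by
    simp only [dotProduct, matVec, mul_sum]
    rw [sum_comm]
    exact sum_congr rfl fun y _ => sum_congr rfl fun y' _ => by ring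
  rw [swap, Fintype.sum_mul_sum]
  simp only [dotProduct, matVec, mul_sum, ← sum_add_distrib]
  exact sum_congr rfl fun y _ => sum_congr rfl fun y' _ => by
    linear_combination p y * q y' * hP y y'

lemma dotProduct_matVec_self_eq_zero (hP : ∀ y y', P y y' + P y' y = 1) {u : Y → ℝ}
    (hu : ∑ y, u y = 0) : u ⬝ᵥ matVec P u = 0 := by
  have h := dotProduct_matVec_add_dotProduct_matVec hP u u
  rw [hu, zero_mul] at h
  linarith

/-- As `v` sums to zero, `P` may be replaced by `P - 1/2`, whose entries lie in `[-1/2, 1/2]`. -/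
lemma abs_dotProduct_matVec_le (hP0 : ∀ y y', 0 ≤ P y y') (hP1 : ∀ y y', P y y' ≤ 1)
    {u v : Y → ℝ} (hv : ∑ y, v y = 0) :
    |u ⬝ᵥ matVec P v| ≤ (∑ y, |u y|) * (∑ y, |v y|) / 2 := by
  have centered : u ⬝ᵥ matVec P v = ∑ y, ∑ y', u y * (P y y' - 1 / 2) * v y' := by
    simp only [dotProduct, matVec, mul_sum]
    refine sum_congr rfl fun y _ => ?_
    have : ∑ y', u y * (1 / 2) * v y' = 0 := by rw [← mul_sum, hv, mul_zero]
    rw [← sub_zero (∑ y', _), ← this, ← sum_sub_distrib]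
    exact sum_congr rfl fun y' _ => by ring
  rw [centered, Fintype.sum_mul_sum, sum_div]
  refine (abs_sum_le_sum_abs _ _).trans (sum_le_sum fun y _ => ?_)
  rw [sum_div]
  refine (abs_sum_le_sum_abs _ _).trans (sum_le_sum fun y' _ => ?_)
  have hc : |P y y' - 1 / 2| ≤ 1 / 2 :=
    abs_le.mpr ⟨by linarith [hP0 y y'], by linarith [hP1 y y']⟩
  rw [abs_mul, abs_mul]
  calc |u y| * |P y y' - 1 / 2| * |v y'| ≤ |u y| * (1 / 2) * |v y'| := by gcongr
    _ = |u y| * |v y'| / 2 := by ring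

lemma abs_sub_dotProduct_matVec_sub_le_sqrt (hP0 : ∀ y y', 0 ≤ P y y')
    (hP1 : ∀ y y', P y y' ≤ 1) {p q r s : Y → ℝ}
    (hp : ∀ y, 0 < p y) (hq : ∀ y, 0 < q y) (hr : ∀ y, 0 < r y) (hs : ∀ y, 0 < s y)
    (hps : ∑ y, p y = 1) (hqs : ∑ y, q y = 1) (hrs : ∑ y, r y = 1) (hss : ∑ y, s y = 1) :
    |(p - q) ⬝ᵥ matVec P (r - s)| ≤ √(KLdiv p q * KLdiv r s) := by
  have hrs0 : ∑ y, (r - s) y = 0 := by simp [sum_sub_distrib, hrs, hss]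
  refine (abs_dotProduct_matVec_le hP0 hP1 hrs0).trans ?_
  have hpq := sq_sum_abs_sub_le_two_mul_KLdiv hp hq hps hqs
  have hrs' := sq_sum_abs_sub_le_two_mul_KLdiv hr hs hrs hss
  have hKpq : 0 ≤ 2 * KLdiv p q := (sq_nonneg _).trans hpq
  have hKrs : 0 ≤ 2 * KLdiv r s := (sq_nonneg _).trans hrs'
  rw [Real.le_sqrt (by positivity) (by nlinarith)]
  simp only [Pi.sub_apply]
  nlinarith [mul_le_mul hpq hrs' (sq_nonneg _) hKpq]

end Preference

section Softmax

variable {Y : Type*} [Fintype Y] [Nonempty Y]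

noncomputable def logSumExp (θ : Y → ℝ) : ℝ :=
  log (∑ y, exp (θ y))

lemma sum_exp_pos (θ : Y → ℝ) : 0 < ∑ y, exp (θ y) :=
  sum_pos (fun _ _ => exp_pos _) univ_nonempty

lemma softmax_pos (θ : Y → ℝ) (y : Y) : 0 < softmax θ y :=
  div_pos (exp_pos _) (sum_exp_pos θ)

lemma sum_softmax (θ : Y → ℝ) : ∑ y, softmax θ y = 1 := by
  simp only [softmax, ← sum_div, div_self (sum_exp_pos θ).ne']

lemma log_softmax (θ : Y → ℝ) (y : Y) : log (softmax θ y) = θ y - logSumExp θ := by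
  rw [softmax, log_div (exp_ne_zero _) (sum_exp_pos θ).ne', log_exp, logSumExp]

lemma KLdiv_softmax_nonneg (a b : Y → ℝ) : 0 ≤ KLdiv (softmax a) (softmax b) :=
  KLdiv_nonneg (fun y => (softmax_pos a y).le) (softmax_pos b) (by rw [sum_softmax, sum_softmax])

lemma KLdiv_softmax_right {p : Y → ℝ} (hp : ∀ y, 0 ≤ p y) (θ : Y → ℝ) :
    KLdiv p (softmax θ) = ∑ y, p y * log (p y) - p ⬝ᵥ θ + (∑ y, p y) * logSumExp θ := by
  have h : ∀ y, p y * log (p y / softmax θ y) =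
      p y * log (p y) - p y * θ y + p y * logSumExp θ := fun y => by
    rcases (hp y).eq_or_lt with h0 | hpos
    · simp [← h0]
    · rw [log_div hpos.ne' (softmax_pos θ y).ne', log_softmax]; ring
  simp only [KLdiv, h, sum_add_distrib, sum_sub_distrib, ← sum_mul, dotProduct]

lemma sum_softmax_mul_log_softmax (θ : Y → ℝ) :
    ∑ y, softmax θ y * log (softmax θ y) = softmax θ ⬝ᵥ θ - logSumExp θ := by
  have h := KLdiv_softmax_right (fun y => (softmax_pos θ y).le) θ
  rw [KLdiv_self, sum_softmax] at h
  linarith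

lemma KLdiv_softmax_three_point {p : Y → ℝ} (hp : ∀ y, 0 ≤ p y) (hps : ∑ y, p y = 1)
    (a b : Y → ℝ) :
    KLdiv p (softmax b) =
      KLdiv p (softmax a) + KLdiv (softmax a) (softmax b) + (p - softmax a) ⬝ᵥ (a - b) := by
  rw [KLdiv_softmax_right hp, KLdiv_softmax_right hp,
    KLdiv_softmax_right (fun y => (softmax_pos a y).le), sum_softmax_mul_log_softmax, hps,
    sum_softmax]
  simp only [dotProduct_sub, sub_dotProduct]
  ring

lemma KLdiv_softmax_add_KLdiv_softmax (a b : Y → ℝ) :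
    KLdiv (softmax a) (softmax b) + KLdiv (softmax b) (softmax a) =
      (softmax a - softmax b) ⬝ᵥ (a - b) := by
  have h := KLdiv_softmax_three_point (fun y => (softmax_pos a y).le) (sum_softmax a) b a
  rw [KLdiv_self] at h
  rw [← neg_sub b a, dotProduct_neg]
  linarith

lemma KLdiv_softmax_mirror_step {p : Y → ℝ} (hp : ∀ y, 0 ≤ p y) (hps : ∑ y, p y = 1)
    (α : ℝ) (a c g : Y → ℝ) :
    KLdiv p (softmax ((1 - α) • a + α • c + g)) =
      (1 - α) * KLdiv p (softmax a) + α * KLdiv p (softmax c)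
        - (1 - α) * KLdiv (softmax ((1 - α) • a + α • c + g)) (softmax a)
        - α * KLdiv (softmax ((1 - α) • a + α • c + g)) (softmax c)
        - (p - softmax ((1 - α) • a + α • c + g)) ⬝ᵥ g := by
  set o := (1 - α) • a + α • c + g
  have ha := KLdiv_softmax_three_point hp hps o a
  have hc := KLdiv_softmax_three_point hp hps o c
  have hg : (p - softmax o) ⬝ᵥ g = (p - softmax o) ⬝ᵥ o
      - (1 - α) * (p - softmax o) ⬝ᵥ a - α * (p - softmax o) ⬝ᵥ c := by
    simp only [o, dotProduct_add, dotProduct_smul, smul_eq_mul]; ring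
  simp only [dotProduct_sub _ o] at ha hc
  linear_combination -(1 - α) * ha - α * hc + hg

end Softmax

noncomputable def regBestResponse {Y : Type*} [Fintype Y] (P : Y → Y → ℝ) (β : ℝ)
    (θref p : Y → ℝ) : Y → ℝ :=
  fun y => θref y + matVec P p y / β

section BestResponse

variable {Y : Type*} [Fintype Y] {P : Y → Y → ℝ} {β : ℝ}

lemma regBestResponse_sub_ref (hβ : β ≠ 0) (θref p : Y → ℝ) :
    β • (regBestResponse P β θref p - θref) = matVec P p := by
  ext y
  simp only [regBestResponse, Pi.smul_apply, Pi.sub_apply, smul_eq_mul]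
  field_simp
  ring

lemma regBestResponse_sub (hβ : β ≠ 0) (θref p p' : Y → ℝ) :
    β • (regBestResponse P β θref p - regBestResponse P β θref p') = matVec P (p - p') := by
  rw [matVec_sub]
  ext y
  simp only [regBestResponse, Pi.smul_apply, Pi.sub_apply, smul_eq_mul]
  field_simp
  ring

lemma smul_sub_regBestResponse {θref θstar : Y → ℝ} (hβ : β ≠ 0)
    (hstar : θstar = regBestResponse P β θref (softmax θstar)) (θ : Y → ℝ) :
    β • (θstar - regBestResponse P β θref (softmax θ)) =
      matVec P (softmax θstar - softmax θ) := by
  have h := regBestResponse_sub (P := P) hβ θref (softmax θstar) (softmax θ)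
  rwa [← hstar] at h

lemma Vreg_swap (hP : ∀ y y', P y y' + P y' y = 1) (πref : Y → ℝ) {p q : Y → ℝ}
    (hp : p ∈ simplex Y) (hq : q ∈ simplex Y) :
    Vreg P β πref q p = 1 - Vreg P β πref p q := by
  have h := dotProduct_matVec_add_dotProduct_matVec hP q p
  rw [hp.2, hq.2, one_mul] at h
  simp only [Vreg, Vval_eq_dotProduct_matVec]
  linarith

variable [Nonempty Y]

lemma Vreg_softmax_eq (hP : ∀ y y', P y y' + P y' y = 1) (hβ : β ≠ 0) (θref θ : Y → ℝ)
    {q : Y → ℝ} (hq : q ∈ simplex Y) :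
    Vreg P β (softmax θref) (softmax θ) q =
      1 / 2 - β * KLdiv (softmax θ) (softmax (regBestResponse P β θref (softmax θ)))
        + β * KLdiv q (softmax (regBestResponse P β θref (softmax θ))) := by
  set p := softmax θ
  set b := regBestResponse P β θref p
  have hp : ∀ y, 0 ≤ p y := fun y => (softmax_pos θ y).le
  have hq3 := KLdiv_softmax_three_point hq.1 hq.2 b θref
  have hp3 := KLdiv_softmax_three_point hp (sum_softmax θ) b θref
  have hbr : ∀ x : Y → ℝ, β * (x ⬝ᵥ (b - θref)) = x ⬝ᵥ matVec P p := fun x => by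
    rw [← smul_eq_mul, ← dotProduct_smul, regBestResponse_sub_ref hβ]
  have hskew := dotProduct_matVec_add_dotProduct_matVec hP p q
  have hself := dotProduct_matVec_add_dotProduct_matVec hP p p
  rw [sum_softmax, hq.2] at hskew
  rw [sum_softmax] at hself
  have hbq := hbr q
  have hbp := hbr p
  simp only [sub_dotProduct] at hq3 hp3 hbq hbp
  rw [Vreg, Vval_eq_dotProduct_matVec]
  linear_combination β * hq3 - β * hp3 + hskew - hself / 2 + hbq - hbp

lemma DualGapReg_softmax_le (hP : ∀ y y', P y y' + P y' y = 1) (hβ : 0 < β)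
    (θref θ : Y → ℝ) :
    DualGapReg P β (softmax θref) (softmax θ) ≤
      2 * β * KLdiv (softmax θ) (softmax (regBestResponse P β θref (softmax θ))) := by
  set b := regBestResponse P β θref (softmax θ)
  have hπ : softmax θ ∈ simplex Y := ⟨fun y => (softmax_pos θ y).le, sum_softmax θ⟩
  have hne : Nonempty (simplex Y) := ⟨⟨_, hπ⟩⟩
  have hKL : ∀ q : simplex Y, 0 ≤ β * KLdiv q.1 (softmax b) := fun q =>
    mul_nonneg hβ.le (KLdiv_nonneg q.2.1 (softmax_pos b) (by rw [q.2.2, sum_softmax]))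
  have hsup : (⨆ q : simplex Y, Vreg P β (softmax θref) q.1 (softmax θ)) ≤
      1 / 2 + β * KLdiv (softmax θ) (softmax b) := ciSup_le fun q => by
    rw [Vreg_swap hP _ hπ q.2, Vreg_softmax_eq hP hβ.ne' θref θ q.2]
    linarith [hKL q]
  have hinf : 1 / 2 - β * KLdiv (softmax θ) (softmax b) ≤
      ⨅ q : simplex Y, Vreg P β (softmax θref) (softmax θ) q.1 := le_ciInf fun q => by
    rw [Vreg_softmax_eq hP hβ.ne' θref θ q.2]
    linarith [hKL q]
  unfold DualGapReg
  linarith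

lemma KLdiv_regBestResponse_eq {θref θstar : Y → ℝ} (hP : ∀ y y', P y y' + P y' y = 1)
    (hβ : β ≠ 0) (hstar : θstar = regBestResponse P β θref (softmax θstar)) (θ : Y → ℝ) :
    KLdiv (softmax θ) (softmax (regBestResponse P β θref (softmax θ))) =
      KLdiv (softmax θ) (softmax θstar)
        + KLdiv (softmax θstar) (softmax (regBestResponse P β θref (softmax θ))) := by
  set b := regBestResponse P β θref (softmax θ)
  have hskew := dotProduct_matVec_self_eq_zero hP (u := softmax θstar - softmax θ)
    (by simp [sum_sub_distrib, sum_softmax])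
  have hvanish : (softmax θ - softmax θstar) ⬝ᵥ (θstar - b) = 0 := by
    refine (mul_eq_zero.mp ?_).resolve_left hβ
    rw [← smul_eq_mul, ← dotProduct_smul, smul_sub_regBestResponse hβ hstar, ← neg_sub,
      neg_dotProduct, hskew, neg_zero]
  rw [KLdiv_softmax_three_point (fun y => (softmax_pos θ y).le) (sum_softmax θ) θstar b,
    hvanish, add_zero]

lemma sq_mul_KLdiv_regBestResponse_le {θref θstar : Y → ℝ} (hP0 : ∀ y y', 0 ≤ P y y')
    (hP1 : ∀ y y', P y y' ≤ 1) (hβ : 0 < β)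
    (hstar : θstar = regBestResponse P β θref (softmax θstar)) (θ : Y → ℝ) :
    β ^ 2 * KLdiv (softmax θstar) (softmax (regBestResponse P β θref (softmax θ))) ≤
      KLdiv (softmax θstar) (softmax θ) := by
  set b := regBestResponse P β θref (softmax θ)
  have hsym : β * (KLdiv (softmax θstar) (softmax b) + KLdiv (softmax b) (softmax θstar)) =
      (softmax θstar - softmax b) ⬝ᵥ matVec P (softmax θstar - softmax θ) := by
    rw [KLdiv_softmax_add_KLdiv_softmax, ← smul_eq_mul, ← dotProduct_smul,
      smul_sub_regBestResponse hβ.ne' hstar]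
  have hcross := (le_abs_self _).trans <| abs_sub_dotProduct_matVec_sub_le_sqrt hP0 hP1
    (softmax_pos θstar) (softmax_pos b) (softmax_pos θstar) (softmax_pos θ)
    (sum_softmax θstar) (sum_softmax b) (sum_softmax θstar) (sum_softmax θ)
  have hKb := KLdiv_softmax_nonneg θstar b
  have hKθ := KLdiv_softmax_nonneg θstar θ
  have hroot : β * KLdiv (softmax θstar) (softmax b) ≤
      √(KLdiv (softmax θstar) (softmax b) * KLdiv (softmax θstar) (softmax θ)) := by
    nlinarith [KLdiv_softmax_nonneg b θstar]
  rw [Real.le_sqrt (mul_nonneg hβ.le hKb) (mul_nonneg hKb hKθ)] at hroot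
  rcases hKb.eq_or_lt with h0 | hpos
  · rw [← h0, mul_zero]; exact hKθ
  · nlinarith

lemma DualGapReg_softmax_le_KLdiv {θref θstar : Y → ℝ} (hP0 : ∀ y y', 0 ≤ P y y')
    (hP1 : ∀ y y', P y y' ≤ 1) (hP : ∀ y y', P y y' + P y' y = 1) (hβ : 0 < β)
    (hstar : θstar = regBestResponse P β θref (softmax θstar)) (θ : Y → ℝ) :
    DualGapReg P β (softmax θref) (softmax θ) ≤
      2 / β * KLdiv (softmax θstar) (softmax θ) + 2 * β * KLdiv (softmax θ) (softmax θstar) := by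
  have hgap := DualGapReg_softmax_le hP hβ θref θ
  rw [KLdiv_regBestResponse_eq hP hβ.ne' hstar θ] at hgap
  have hsq := sq_mul_KLdiv_regBestResponse_le hP0 hP1 hβ hstar θ
  have hdiv : β * KLdiv (softmax θstar) (softmax (regBestResponse P β θref (softmax θ))) ≤
      KLdiv (softmax θstar) (softmax θ) / β := by
    rw [le_div_iff₀ hβ]; linarith
  rw [div_mul_eq_mul_div, mul_div_assoc]
  linarith

end BestResponse

noncomputable def egpoUpdate {Y : Type*} [Fintype Y] (P : Y → Y → ℝ) (β η : ℝ)
    (θref a p : Y → ℝ) : Y → ℝ :=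
  fun y => (1 - η * β) * a y + η * β * regBestResponse P β θref p y

section EGPO

variable {Y : Type*} [Fintype Y] {P : Y → Y → ℝ} {β η : ℝ} {θref θstar : Y → ℝ}

lemma egpoUpdate_eq (hβ : β ≠ 0) (hstar : θstar = regBestResponse P β θref (softmax θstar))
    (a p : Y → ℝ) :
    egpoUpdate P β η θref a p =
      (1 - η * β) • a + (η * β) • θstar + η • matVec P (p - softmax θstar) := by
  rw [← regBestResponse_sub hβ θref, ← hstar]
  ext y
  simp only [egpoUpdate, Pi.add_apply, Pi.smul_apply, Pi.sub_apply, smul_eq_mul]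
  ring

variable [Nonempty Y] {a h o : Y → ℝ}

lemma egpo_step_contraction (hP0 : ∀ y y', 0 ≤ P y y') (hP1 : ∀ y y', P y y' ≤ 1)
    (hP : ∀ y y', P y y' + P y' y = 1) (hη : 0 ≤ η)
    (hβ : β ≠ 0) (hstar : θstar = regBestResponse P β θref (softmax θstar))
    (hh : h = egpoUpdate P β η θref a (softmax a))
    (ho : o = egpoUpdate P β η θref a (softmax h)) :
    KLdiv (softmax θstar) (softmax o) + η * β * KLdiv (softmax h) (softmax θstar)
      + (1 - η / 4) * KLdiv (softmax o) (softmax h)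
      + (1 - η * β - η) * KLdiv (softmax h) (softmax a)
      ≤ (1 - η * β) * KLdiv (softmax θstar) (softmax a) := by
  have hEo := KLdiv_softmax_mirror_step (fun y => (softmax_pos θstar y).le)
    (sum_softmax θstar) (η * β) a θstar (η • matVec P (softmax h - softmax θstar))
  have hEh := KLdiv_softmax_mirror_step (fun y => (softmax_pos o y).le) (sum_softmax o)
    (η * β) a θstar (η • matVec P (softmax a - softmax θstar))
  rw [← egpoUpdate_eq hβ hstar, ← ho, KLdiv_self] at hEo
  rw [← egpoUpdate_eq hβ hstar, ← hh] at hEh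
  have hskew := dotProduct_matVec_self_eq_zero hP (u := softmax h - softmax θstar)
    (by simp [sum_sub_distrib, sum_softmax])
  have hcross := (le_abs_self _).trans <| abs_sub_dotProduct_matVec_sub_le_sqrt hP0 hP1
    (softmax_pos o) (softmax_pos h) (softmax_pos h) (softmax_pos a)
    (sum_softmax o) (sum_softmax h) (sum_softmax h) (sum_softmax a)
  have hamgm : √(KLdiv (softmax o) (softmax h) * KLdiv (softmax h) (softmax a)) ≤
      KLdiv (softmax o) (softmax h) / 4 + KLdiv (softmax h) (softmax a) := by
    simpa using sqrt_mul_le_div_add_mul (KLdiv_softmax_nonneg o h) (KLdiv_softmax_nonneg h a)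
      one_pos
  simp only [dotProduct_smul, smul_eq_mul, matVec_sub, dotProduct_sub, sub_dotProduct]
    at hEo hEh hskew hcross
  -- In `hEo + hEh`, `hskew` cancels `(π_h - π*) ⬝ᵥ P (π_h - π*)`; the one remaining bilinear
  -- term is the one bounded by `hcross`.
  linarith [mul_le_mul_of_nonneg_left (hcross.trans hamgm) hη, mul_eq_zero_of_right η hskew]

lemma egpo_step_reverse (hP0 : ∀ y y', 0 ≤ P y y') (hP1 : ∀ y y', P y y' ≤ 1)
    (hη : 0 ≤ η) (hηβ : η * β ≤ 1) (hβ : β ≠ 0)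
    (hstar : θstar = regBestResponse P β θref (softmax θstar))
    (hh : h = egpoUpdate P β η θref a (softmax a)) :
    η * β * KLdiv (softmax o) (softmax θstar) ≤
      η * β * KLdiv (softmax h) (softmax θstar) + (1 + η / 6) * KLdiv (softmax o) (softmax h)
        + (1 - η * β) * KLdiv (softmax h) (softmax a)
        + 3 * η / 2 * KLdiv (softmax θstar) (softmax a) := by
  have hEh := KLdiv_softmax_mirror_step (fun y => (softmax_pos o y).le) (sum_softmax o)
    (η * β) a θstar (η • matVec P (softmax a - softmax θstar))
  rw [← egpoUpdate_eq hβ hstar, ← hh] at hEh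
  have hcross := (neg_le_abs _).trans <| abs_sub_dotProduct_matVec_sub_le_sqrt hP0 hP1
    (softmax_pos o) (softmax_pos h) (softmax_pos θstar) (softmax_pos a)
    (sum_softmax o) (sum_softmax h) (sum_softmax θstar) (sum_softmax a)
  have hamgm := sqrt_mul_le_div_add_mul (KLdiv_softmax_nonneg o h)
    (KLdiv_softmax_nonneg θstar a) (by norm_num : (0 : ℝ) < 3 / 2)
  simp only [dotProduct_smul, smul_eq_mul, matVec_sub, dotProduct_sub, sub_dotProduct]
    at hEh hcross
  linarith [mul_le_mul_of_nonneg_left (hcross.trans hamgm) hη,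
    mul_nonneg (sub_nonneg.mpr hηβ) (KLdiv_softmax_nonneg o a)]

lemma egpo_step_KLdiv_le (hP0 : ∀ y y', 0 ≤ P y y') (hP1 : ∀ y y', P y y' ≤ 1)
    (hP : ∀ y y', P y y' + P y' y = 1) (hβ : 0 < β) (hη : 0 < η) (hηβ : η * (β + 3) ≤ 1)
    (hstar : θstar = regBestResponse P β θref (softmax θstar))
    (hh : h = egpoUpdate P β η θref a (softmax a))
    (ho : o = egpoUpdate P β η θref a (softmax h)) :
    KLdiv (softmax θstar) (softmax o) ≤ (1 - η * β) * KLdiv (softmax θstar) (softmax a) := by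
  have h1 := egpo_step_contraction hP0 hP1 hP hη.le hβ.ne' hstar hh ho
  have h2 := mul_nonneg (mul_pos hη hβ).le (KLdiv_softmax_nonneg h θstar)
  have h3 := mul_nonneg (by nlinarith : 0 ≤ 1 - η / 4) (KLdiv_softmax_nonneg o h)
  have h4 := mul_nonneg (by nlinarith : 0 ≤ 1 - η * β - η) (KLdiv_softmax_nonneg h a)
  linarith

lemma egpo_step_potential (hP0 : ∀ y y', 0 ≤ P y y') (hP1 : ∀ y y', P y y' ≤ 1)
    (hP : ∀ y y', P y y' + P y' y = 1) (hβ : 0 < β) (hη : 0 < η) (hηβ : η * (β + 3) ≤ 1)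
    (hstar : θstar = regBestResponse P β θref (softmax θstar))
    (hh : h = egpoUpdate P β η θref a (softmax a))
    (ho : o = egpoUpdate P β η θref a (softmax h)) :
    2 / β * KLdiv (softmax θstar) (softmax o) + 2 * β * KLdiv (softmax o) (softmax θstar) ≤
      (2 / β + 4 / η) * ((1 - η * β) * KLdiv (softmax θstar) (softmax a)) := by
  have I1 := egpo_step_contraction hP0 hP1 hP hη.le hβ.ne' hstar hh ho
  have I2 := egpo_step_reverse (o := o) hP0 hP1 hη.le (by nlinarith) hβ.ne' hstar hh
  have hoh := KLdiv_softmax_nonneg o h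
  have hha := KLdiv_softmax_nonneg h a
  have hhs := KLdiv_softmax_nonneg h θstar
  have hsa := KLdiv_softmax_nonneg θstar a
  have hso := KLdiv_softmax_nonneg θstar o
  set Kso := KLdiv (softmax θstar) (softmax o)
  set Kos := KLdiv (softmax o) (softmax θstar)
  set Ksa := KLdiv (softmax θstar) (softmax a)
  -- `(η + 3β/2) * I1 + β * I2`; each leftover coefficient is nonnegative as `3η ≤ 1 - ηβ`.
  have key : η * Kso + η * β ^ 2 * Kos ≤ (η + 2 * β) * ((1 - η * β) * Ksa) := by
    linarith [mul_le_mul_of_nonneg_left I1 (by positivity : 0 ≤ η + 3 * β / 2),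
      mul_le_mul_of_nonneg_left I2 hβ.le,
      mul_nonneg (by nlinarith : 0 ≤ η * (1 - η / 4) + β * (1 / 2 - 13 * η / 24)) hoh,
      mul_nonneg (by nlinarith : 0 ≤ η * (1 - η * β - η) + β * (1 - η * β - 3 * η) / 2) hha,
      mul_nonneg (by positivity : 0 ≤ (η + β / 2) * (η * β)) hhs,
      mul_nonneg (by nlinarith : 0 ≤ β * (1 - η * β - 3 * η) / 2) hsa,
      mul_nonneg (by positivity : 0 ≤ 3 * β / 2) hso]
  calc 2 / β * Kso + 2 * β * Kos = 2 / (η * β) * (η * Kso + η * β ^ 2 * Kos) := by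
        field_simp
    _ ≤ 2 / (η * β) * ((η + 2 * β) * ((1 - η * β) * Ksa)) := by gcongr
    _ = (2 / β + 4 / η) * ((1 - η * β) * Ksa) := by
        field_simp
        ring

end EGPO

/-- under exact EGPO updates with `0 < η ≤ 1/(β+3)`, for every `T ≥ 1`,
`DualGap_β(π^{(T)}) ≤ (2/β + 4/η) · KL(π*_β ‖ π^{(0)}) · (1 − ηβ)^T`. -/
theorem egpo_exact_linear_convergence_dual_gap
    {Y : Type*} [Fintype Y] (hY : 2 ≤ Fintype.card Y)
    (P : Y → Y → ℝ)
    (hP0 : ∀ y y', 0 ≤ P y y') (hP1 : ∀ y y', P y y' ≤ 1)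
    (hPsum : ∀ y y', P y y' + P y' y = 1)
    (β : ℝ) (hβ : 0 < β)
    (θref : Y → ℝ)
    (θstar : Y → ℝ)
    (hstar : θstar = fun y => θref y + matVec P (softmax θstar) y / β)
    (η : ℝ) (hη : 0 < η) (hη' : η ≤ 1 / (β + 3))
    (θ θhalf : ℕ → Y → ℝ)
    (hhalf : ∀ t, θhalf t = fun y =>
      (1 - η * β) * θ t y + η * β * (θref y + matVec P (softmax (θ t)) y / β))
    (hstep : ∀ t, θ (t + 1) = fun y =>
      (1 - η * β) * θ t y + η * β * (θref y + matVec P (softmax (θhalf t)) y / β))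
    (T : ℕ) (hT : 1 ≤ T) :
    DualGapReg P β (softmax θref) (softmax (θ T))
      ≤ (2 / β + 4 / η) * KLdiv (softmax θstar) (softmax (θ 0)) * (1 - η * β) ^ T := by
  have : Nonempty Y := Fintype.card_pos_iff.mp (by omega)
  have hηβ : η * (β + 3) ≤ 1 := (le_div_iff₀ (by linarith)).mp hη'
  have hρ : 0 ≤ 1 - η * β := by nlinarith
  have hgeom : ∀ t, KLdiv (softmax θstar) (softmax (θ t)) ≤
      (1 - η * β) ^ t * KLdiv (softmax θstar) (softmax (θ 0)) := fun t =>
    le_geom (u := fun t => KLdiv (softmax θstar) (softmax (θ t))) hρ t fun k _ =>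
      egpo_step_KLdiv_le hP0 hP1 hPsum hβ hη hηβ hstar (hhalf k) (hstep k)
  obtain ⟨N, rfl⟩ : ∃ N, T = N + 1 := ⟨T - 1, by omega⟩
  calc DualGapReg P β (softmax θref) (softmax (θ (N + 1)))
      ≤ 2 / β * KLdiv (softmax θstar) (softmax (θ (N + 1)))
          + 2 * β * KLdiv (softmax (θ (N + 1))) (softmax θstar) :=
        DualGapReg_softmax_le_KLdiv hP0 hP1 hPsum hβ hstar _
    _ ≤ (2 / β + 4 / η) * ((1 - η * β) * KLdiv (softmax θstar) (softmax (θ N))) :=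
        egpo_step_potential hP0 hP1 hPsum hβ hη hηβ hstar (hhalf N) (hstep N)
    _ ≤ (2 / β + 4 / η) *
          ((1 - η * β) * ((1 - η * β) ^ N * KLdiv (softmax θstar) (softmax (θ 0)))) := by
        gcongr
        exact hgeom N
    _ = (2 / β + 4 / η) * KLdiv (softmax θstar) (softmax (θ 0)) * (1 - η * β) ^ (N + 1) := by
        ring
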